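/- arXiv:2009.05364 — 2 statements merged into one kernel-verified Lean document; each statement's English description precedes it below -/
import Mathlib

section
/- For every integer n ≥ 1, the sum F_n(f) is a rational number, i.e. there exists q ∈ ℚ with F_n(f) = q. -/
open Real Filter

noncomputable section

/-- `ψ(x) = 1 − (1/L) ∑_{ℓ=1}^L cos(s_ℓ · x)`. -/
def psi (L : ℕ) (s : Fin L → ℤ × ℤ) (x y : ℝ) : ℝ :=
  1 - (1 / L) * ∑ ℓ, Real.cos ((s ℓ).1 * x + (s ℓ).2 * y)

/-- `f = 1/ψ`. -/
def f (L : ℕ) (s : Fin L → ℤ × ℤ) (x y : ℝ) : ℝ := 1 / psi L s x y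

/-- `F_n(f) = ∑_{0 ≤ j,k ≤ n−1, (j,k) ≠ (0,0)} f(2πj/n, 2πk/n)`. -/
def Fsum (L : ℕ) (s : Fin L → ℤ × ℤ) (n : ℕ) : ℝ :=
  ∑ j ∈ Finset.range n, ∑ k ∈ Finset.range n,
    if (j, k) ≠ (0, 0) then f L s (2 * π * j / n) (2 * π * k / n) else 0

/-!
Writing `cos (2πt/n) = (ζ^t + ζ^(-t))/2` with `ζ = exp (2πi/n)`, the sum `F_n(f)` is an expression
in the additive character `t ↦ ζ^t` of `ZMod n`, and the same expression makes sense for any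
character `χ : ZMod n → K` whose value at `1` is a primitive `n`-th root of unity. Any two such
characters differ by `t ↦ u t` for a unit `u` of `ZMod n`, which the substitution `p ↦ u p` on
`(ZMod n)²` absorbs. So in the cyclotomic field `ℚ(μ_n)` the expression is fixed by every Galois
automorphism, hence rational, and an embedding `ℚ(μ_n) → ℂ` carries it to `F_n(f)`.
-/

open Finset

theorem AddChar.exists_mulShift_eq_of_isPrimitiveRoot {n : ℕ} [NeZero n] {R : Type*}
    [CommRing R] [IsDomain R] {χ χ' : AddChar (ZMod n) R} (hχ : IsPrimitiveRoot (χ 1) n)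
    (hχ' : IsPrimitiveRoot (χ' 1) n) : ∃ u : (ZMod n)ˣ, χ' = χ.mulShift u := by
  obtain ⟨c, -, hc, hpow⟩ := hχ.isPrimitiveRoot_iff.1 hχ'
  refine ⟨ZMod.unitOfCoprime c hc, ?_⟩
  ext a
  rw [ZMod.coe_unitOfCoprime, AddChar.mulShift_spec', ← ZMod.natCast_zmod_val a,
    ← nsmul_one, AddChar.map_nsmul_eq_pow, AddChar.map_nsmul_eq_pow, ← hpow, pow_right_comm]

theorem AddChar.isPrimitiveRoot_zmodChar_one {n : ℕ} [NeZero n] {R : Type*} [CommMonoid R]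
    {ζ : R} (hζ : IsPrimitiveRoot ζ n) : IsPrimitiveRoot (zmodChar n hζ.pow_eq_one 1) n := by
  convert hζ
  simpa using zmodChar_apply' hζ.pow_eq_one 1

namespace ZMod

variable {n : ℕ}

theorem natCast_eq_zero_iff_of_lt {j : ℕ} (hj : j < n) : (j : ZMod n) = 0 ↔ j = 0 := by
  rw [← val_eq_zero, val_natCast_of_lt hj]

variable [NeZero n]

theorem sum_univ_eq_sum_range {M : Type*} [AddCommMonoid M] (g : ZMod n → M) :
    ∑ a, g a = ∑ j ∈ range n, g j :=
  sum_nbij' val Nat.cast (fun a _ => mem_range.2 (val_lt a)) (fun _ _ => mem_univ _)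
    (fun a _ => natCast_zmod_val a) (fun _ hj => val_natCast_of_lt (mem_range.1 hj))
    (fun a _ => by rw [natCast_zmod_val])

theorem isPrimitiveRoot_stdAddChar_one : IsPrimitiveRoot (stdAddChar (1 : ZMod n)) n := by
  convert Complex.isPrimitiveRoot_exp n (NeZero.ne n)
  simpa using stdAddChar_coe (N := n) 1

theorem stdAddChar_add_stdAddChar_neg_div_two (t : ℤ) :
    (stdAddChar (t : ZMod n) + stdAddChar (-(t : ZMod n))) / 2 = Complex.cos (2 * π * t / n) := by
  rw [← Int.cast_neg, stdAddChar_coe, stdAddChar_coe, Complex.cos]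
  push_cast
  ring_nf

end ZMod

section CharFsum

variable (L : ℕ) (s : Fin L → ℤ × ℤ) {n : ℕ} {K K' : Type*} [Field K] [Field K']

def charPsi (χ : AddChar (ZMod n) K) (p : ZMod n × ZMod n) : K :=
  1 - (L : K)⁻¹ * ∑ ℓ, (χ ((s ℓ).1 * p.1 + (s ℓ).2 * p.2)
    + χ (-((s ℓ).1 * p.1 + (s ℓ).2 * p.2))) / 2

def charFsum [NeZero n] (χ : AddChar (ZMod n) K) : K :=
  ∑ p with p ≠ 0, (charPsi L s χ p)⁻¹

variable {L s}

theorem charPsi_mulShift (χ : AddChar (ZMod n) K) (u : (ZMod n)ˣ) (p : ZMod n × ZMod n) :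
    charPsi L s (χ.mulShift u) p = charPsi L s χ (u • p) := by
  simp only [charPsi, AddChar.mulShift_apply, Prod.smul_fst, Prod.smul_snd, Units.smul_def,
    smul_eq_mul, mul_neg, mul_add, mul_left_comm (u : ZMod n)]

variable [NeZero n]

theorem charFsum_mulShift (χ : AddChar (ZMod n) K) (u : (ZMod n)ˣ) :
    charFsum L s (χ.mulShift u) = charFsum L s χ :=
  sum_equiv (MulAction.toPerm u)
    (fun p => by
      simp only [mem_filter, mem_univ, true_and, MulAction.toPerm_apply, ne_eq,
        smul_eq_zero_iff_eq])
    (fun p _ => by rw [charPsi_mulShift, MulAction.toPerm_apply])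

theorem charFsum_eq_of_isPrimitiveRoot {χ χ' : AddChar (ZMod n) K}
    (hχ : IsPrimitiveRoot (χ 1) n) (hχ' : IsPrimitiveRoot (χ' 1) n) :
    charFsum L s χ = charFsum L s χ' := by
  obtain ⟨u, rfl⟩ := AddChar.exists_mulShift_eq_of_isPrimitiveRoot hχ hχ'
  exact (charFsum_mulShift χ u).symm

variable {F : Type*} [FunLike F K K'] [RingHomClass F K K']

theorem map_charFsum (φ : F) (χ : AddChar (ZMod n) K) :
    φ (charFsum L s χ) = charFsum L s ((φ : K →* K').compAddChar χ) := by
  simp [charFsum, charPsi, map_ofNat]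

theorem map_charFsum_of_isPrimitiveRoot (φ : F) {χ : AddChar (ZMod n) K}
    {χ' : AddChar (ZMod n) K'} (hχ : IsPrimitiveRoot (χ 1) n) (hχ' : IsPrimitiveRoot (χ' 1) n) :
    φ (charFsum L s χ) = charFsum L s χ' := by
  rw [map_charFsum]
  exact charFsum_eq_of_isPrimitiveRoot (hχ.map_of_injective (φ : K →+* K').injective) hχ'

theorem charFsum_mem_range_algebraMap {k : Type*} [Field k] [Algebra k K]
    [IsCyclotomicExtension {n} k K] {χ : AddChar (ZMod n) K} (hχ : IsPrimitiveRoot (χ 1) n) :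
    charFsum L s χ ∈ Set.range (algebraMap k K) := by
  have := IsCyclotomicExtension.isGalois {n} k K
  have := IsCyclotomicExtension.finiteDimensional {n} k K
  exact (IsGalois.mem_range_algebraMap_iff_fixed _).2 fun σ =>
    map_charFsum_of_isPrimitiveRoot σ hχ hχ

theorem charPsi_stdAddChar (j k : ℕ) :
    charPsi L s ZMod.stdAddChar ((j : ZMod n), (k : ZMod n))
      = psi L s (2 * π * j / n) (2 * π * k / n) := by
  simp only [charPsi, psi, one_div]
  push_cast
  congr 2
  refine sum_congr rfl fun ℓ _ => ?_
  have := ZMod.stdAddChar_add_stdAddChar_neg_div_two (n := n) ((s ℓ).1 * j + (s ℓ).2 * k)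
  push_cast at this
  rw [this]
  ring_nf

theorem charFsum_stdAddChar : charFsum L s (ZMod.stdAddChar (N := n)) = Fsum L s n := by
  rw [charFsum, sum_filter, Fintype.sum_prod_type, ZMod.sum_univ_eq_sum_range, Fsum]
  push_cast
  refine sum_congr rfl fun j hj => ?_
  rw [ZMod.sum_univ_eq_sum_range]
  refine sum_congr rfl fun k hk => ?_
  simp only [ne_eq, Prod.mk_eq_zero, Prod.mk.injEq, charPsi_stdAddChar, f, one_div,
    ZMod.natCast_eq_zero_iff_of_lt (mem_range.1 hj),
    ZMod.natCast_eq_zero_iff_of_lt (mem_range.1 hk)]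
  split_ifs <;> push_cast <;> rfl

end CharFsum

/-- for every `n ≥ 1`, the sum `F_n(f)` is a rational number. -/
theorem Fn_rational (L : ℕ) (s : Fin L → ℤ × ℤ) (n : ℕ) (hn : 1 ≤ n) :
    ∃ q : ℚ, Fsum L s n = q := by
  have : NeZero n := ⟨by omega⟩
  -- not found by instance search, which uses `DivisionRing.toRatAlgebra` for the `ℚ`-algebra
  have : IsCyclotomicExtension {n} ℚ (CyclotomicField n ℚ) :=
    CyclotomicField.isCyclotomicExtension n ℚ
  have hχ := AddChar.isPrimitiveRoot_zmodChar_one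
    (IsCyclotomicExtension.zeta_spec n ℚ (CyclotomicField n ℚ))
  obtain ⟨q, hq⟩ := charFsum_mem_range_algebraMap (k := ℚ) (L := L) (s := s) hχ
  refine ⟨q, ?_⟩
  have hφ := congrArg (IsAlgClosed.lift : CyclotomicField n ℚ →ₐ[ℚ] ℂ) hq
  rw [AlgHom.commutes, map_charFsum_of_isPrimitiveRoot _ hχ ZMod.isPrimitiveRoot_stdAddChar_one,
    charFsum_stdAddChar, eq_ratCast] at hφ
  exact_mod_cast hφ.symm

end
end

section
/- For every β with 0 < β < 2π there exists a constant C₁(β) > 0 such that ψ(x) ≥ C₁(β) ‖x‖² for all x ∈ [−2π+β, 2π−β] × [−2π+β, 2π−β]. In particular, ψ(x) ≥ ‖x‖²/(4L) for all x with ‖x‖ ≤ √6. -/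
/-!
Dropping all but the first two (nonnegative) terms gives `L ψ(x, y) ≥ (1 - cos x) + (1 - cos y)`,
so it suffices to bound `1 - cos t = 2 sin² (t / 2)` below by a multiple of `t²`. On
`|t| ≤ 2π - β` this follows from concavity of `sin` on `[0, π]` (the chord from `0` to
`a = π - β / 2` lies below the graph); for `t² ≤ 6` from `sin u ≥ u - u³ / 6`.
-/

open Real

noncomputable section

lemma sq_mul_sq_div_two_le_one_sub_cos {c x : ℝ} (hc : 0 ≤ c)
    (h : c * (|x| / 2) ≤ sin (|x| / 2)) : c ^ 2 / 2 * x ^ 2 ≤ 1 - cos x := by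
  have hsq := (pow_le_pow_left₀ (by positivity) h 2).trans_eq (sin_sq_eq_half_sub _)
  rw [show 2 * (|x| / 2) = |x| by ring, cos_abs, mul_pow, div_pow, sq_abs] at hsq
  linarith

lemma sin_div_mul_le_sin {a u : ℝ} (hu : 0 ≤ u) (hua : u ≤ a) (ha : a ≤ π) :
    sin a / a * u ≤ sin u := by
  obtain rfl | hu := hu.eq_or_lt
  · simp
  have hslope := strictConcaveOn_sin_Icc.concaveOn.slope_anti (x := 0) ⟨le_rfl, pi_pos.le⟩
    ⟨⟨hu.le, hua.trans ha⟩, hu.ne'⟩ ⟨⟨hu.le.trans hua, ha⟩, (hu.trans_le hua).ne'⟩ hua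
  simp only [slope_def_field, sin_zero, sub_zero] at hslope
  calc sin a / a * u ≤ sin u / u * u := by gcongr
    _ = sin u := div_mul_cancel₀ _ hu.ne'

lemma sin_div_sq_div_two_mul_sq_le_one_sub_cos {a x : ℝ} (ha : a ≤ π) (hx : |x| ≤ 2 * a) :
    (sin a / a) ^ 2 / 2 * x ^ 2 ≤ 1 - cos x := by
  have ha₀ : 0 ≤ a := by linarith [abs_nonneg x]
  exact sq_mul_sq_div_two_le_one_sub_cos
    (div_nonneg (sin_nonneg_of_nonneg_of_le_pi ha₀ ha) ha₀)
    (sin_div_mul_le_sin (by positivity) (by linarith) ha)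

lemma sq_div_four_le_one_sub_cos {x : ℝ} (hx : x ^ 2 ≤ 6) : x ^ 2 / 4 ≤ 1 - cos x := by
  have hu : 0 ≤ |x| / 2 := by positivity
  have hu2 : (|x| / 2) ^ 2 ≤ 3 / 2 := by rw [div_pow, sq_abs]; linarith
  -- `sin u ≥ u - u³ / 6 ≥ 3u / 4` for `u² ≤ 3 / 2`, and `(3 / 4)² / 2 = 9 / 32 ≥ 1 / 4`
  have hsin : 3 / 4 * (|x| / 2) ≤ sin (|x| / 2) := by
    nlinarith [sin_ge_sub_cube hu]
  have := sq_mul_sq_div_two_le_one_sub_cos (by norm_num) hsin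
  nlinarith [sq_nonneg x]

section psi

variable {L : ℕ} {s : Fin L → ℤ × ℤ}

lemma psi_eq_sum_one_sub_cos_div (hL : L ≠ 0) (x y : ℝ) :
    psi L s x y = (∑ ℓ, (1 - cos ((s ℓ).1 * x + (s ℓ).2 * y))) / L := by
  rw [psi, Finset.sum_sub_distrib]
  simp only [Finset.sum_const, Finset.card_univ, Fintype.card_fin, nsmul_eq_mul, mul_one]
  rw [sub_div, div_self (Nat.cast_ne_zero.2 hL), one_div, inv_mul_eq_div]

variable {i j : Fin L} (hij : i ≠ j) (hi : s i = (1, 0)) (hj : s j = (0, 1))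
include hij hi hj

lemma one_sub_cos_add_one_sub_cos_div_le_psi (x y : ℝ) :
    ((1 - cos x) + (1 - cos y)) / L ≤ psi L s x y := by
  rw [psi_eq_sum_one_sub_cos_div (Fin.pos i).ne']
  gcongr
  convert Finset.add_le_sum (f := fun ℓ ↦ 1 - cos ((s ℓ).1 * x + (s ℓ).2 * y))
    (fun ℓ _ ↦ sub_nonneg.2 (cos_le_one _)) (Finset.mem_univ i) (Finset.mem_univ j) hij
    using 2 <;> simp [hi, hj]

lemma div_mul_sq_add_sq_le_psi {c x y : ℝ}
    (hx : c * x ^ 2 ≤ 1 - cos x) (hy : c * y ^ 2 ≤ 1 - cos y) :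
    c / L * (x ^ 2 + y ^ 2) ≤ psi L s x y := by
  refine le_trans ?_ (one_sub_cos_add_one_sub_cos_div_le_psi hij hi hj x y)
  rw [div_mul_eq_mul_div]
  gcongr
  linarith

end psi

/-- for `0 < β < 2π` there is `C₁(β) > 0` with `ψ(x) ≥ C₁(β)‖x‖²` on
`[−2π+β, 2π−β]²`; in particular `ψ(x) ≥ ‖x‖²/(4L)` whenever `‖x‖ ≤ √6`. -/
theorem psi_lower_bound (L : ℕ) (hL : 2 ≤ L) (s : Fin L → ℤ × ℤ)
    (h1 : s ⟨0, by omega⟩ = (1, 0)) (h2 : s ⟨1, by omega⟩ = (0, 1)) :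
    (∀ β : ℝ, 0 < β → β < 2 * π → ∃ C₁ : ℝ, 0 < C₁ ∧
      ∀ x y : ℝ, x ∈ Set.Icc (-(2 * π) + β) (2 * π - β) →
        y ∈ Set.Icc (-(2 * π) + β) (2 * π - β) →
        C₁ * (x ^ 2 + y ^ 2) ≤ psi L s x y) ∧
    (∀ x y : ℝ, Real.sqrt (x ^ 2 + y ^ 2) ≤ Real.sqrt 6 →
      (x ^ 2 + y ^ 2) / (4 * L) ≤ psi L s x y) := by
  have hij : (⟨0, by omega⟩ : Fin L) ≠ ⟨1, by omega⟩ := by simp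
  refine ⟨fun β hβ hβ' ↦ ?_, fun x y hxy ↦ ?_⟩
  · have hsin : 0 < sin (π - β / 2) := sin_pos_of_pos_of_lt_pi (by linarith) (by linarith)
    refine ⟨(sin (π - β / 2) / (π - β / 2)) ^ 2 / 2 / L,
      div_pos (half_pos (pow_pos (div_pos hsin (by linarith)) 2)) (by positivity), fun x y hx hy ↦ ?_⟩
    have habs {t : ℝ} (ht : t ∈ Set.Icc (-(2 * π) + β) (2 * π - β)) : |t| ≤ 2 * (π - β / 2) :=
      abs_le.2 ⟨by linarith [ht.1], by linarith [ht.2]⟩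
    exact div_mul_sq_add_sq_le_psi hij h1 h2
      (sin_div_sq_div_two_mul_sq_le_one_sub_cos (by linarith) (habs hx))
      (sin_div_sq_div_two_mul_sq_le_one_sub_cos (by linarith) (habs hy))
  · have h6 : x ^ 2 + y ^ 2 ≤ 6 := (sqrt_le_sqrt_iff (by norm_num)).1 hxy
    convert div_mul_sq_add_sq_le_psi (c := 1 / 4) (x := x) (y := y) hij h1 h2
      (by linarith [sq_div_four_le_one_sub_cos (x := x) (by linarith [sq_nonneg y])])
      (by linarith [sq_div_four_le_one_sub_cos (x := y) (by linarith [sq_nonneg x])]) using 1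
    ring

end
end
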